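/- In 1D tiled NATTEN with tile size T, window size W (W odd, W ≥ 2T−1), a query tile is dense with respect to a key tile exactly when every query in the query tile has the key tile fully inside its window; the number of key tiles dense for a fixed interior query tile equals 2·⌊(W+1)/(2T)⌋ − 1. -/
import Mathlib


/-- Token `q` lies in the 1D tile with index `a` (tile size `T`). -/
def inTile (T a q : ℤ) : Prop := a * T ≤ q ∧ q < a * T + T

/-- 1D NATTEN attendance (boundary effects ignored): `q` attends `k` iff `|q-k| ≤ (W-1)/2`. -/
def attend1 (W q k : ℤ) : Prop := |q - k| ≤ (W - 1) / 2

/-- Key tile `b` is dense for query tile `a`. -/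
def dense1 (T W a b : ℤ) : Prop :=
  ∀ q k : ℤ, inTile T a q → inTile T b k → attend1 W q k


lemma dense1_iff' (T W : ℤ) (hT : 0 < T) (a b : ℤ) :
    dense1 T W a b ↔
      ((a - b) * T + T - 1 ≤ (W - 1) / 2 ∧ (b - a) * T + T - 1 ≤ (W - 1) / 2) := by
  constructor
  · intro hd
    have h1 := hd (a*T) (b*T+T-1) ⟨le_refl _, by omega⟩ ⟨by omega, by omega⟩
    have h2 := hd (a*T+T-1) (b*T) ⟨by omega, by omega⟩ ⟨le_refl _, by omega⟩
    rw [attend1, abs_le] at h1 h2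
    have e1 : (a - b) * T = a*T - b*T := by ring
    have e2 : (b - a) * T = b*T - a*T := by ring
    constructor <;> linarith [h1.1, h1.2, h2.1, h2.2]
  · rintro ⟨c1, c2⟩ q k ⟨hq1, hq2⟩ ⟨hk1, hk2⟩
    rw [attend1, abs_le]
    have e1 : (a - b) * T = a*T - b*T := by ring
    have e2 : (b - a) * T = b*T - a*T := by ring
    constructor <;> linarith

/-- 1D tiled NATTEN with tile size `T`, odd window `W ≥ 2T-1`, interior query tile `a`:
a key tile is dense iff every query in the query tile has the key tile fully inside its
window `[q-(W-1)/2, q+(W-1)/2]`, and the number of dense key tiles equals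
`2⌊(W+1)/(2T)⌋ - 1`. -/
theorem natten1d_dense_tiles (T W : ℤ) (hT : 0 < T) (hodd : Odd W)
    (hW : 2 * T - 1 ≤ W) (a : ℤ) :
    (∀ b : ℤ, dense1 T W a b ↔
      ∀ q : ℤ, inTile T a q → ∀ k : ℤ, inTile T b k →
        q - (W - 1) / 2 ≤ k ∧ k ≤ q + (W - 1) / 2) ∧
    (Set.ncard {b : ℤ | dense1 T W a b} : ℤ) = 2 * ((W + 1) / (2 * T)) - 1 := by
  obtain ⟨c, hc⟩ := hodd
  have hhalf : (W - 1) / 2 = c := by omega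
  constructor
  · intro b
    constructor
    · intro hd q hq k hk
      have := hd q k hq hk
      rw [attend1, abs_le] at this; omega
    · intro hb q k hq hk
      have := hb q hq k hk
      rw [attend1, abs_le]; omega
  · set M : ℤ := (W + 1) / (2 * T) - 1 with hM
    have hMval : (W + 1) / (2 * T) = (c + 1) / T := by
      have h2 : W + 1 = 2 * (c + 1) := by omega
      rw [h2, Int.mul_ediv_mul_of_pos _ _ (by norm_num : (0:ℤ) < 2)]
    have hM0 : 0 ≤ M := by
      have : (1:ℤ) ≤ (W + 1) / (2 * T) := by
        rw [Int.le_ediv_iff_mul_le (by linarith)]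
        omega
      omega
    have habm : ∀ x : ℤ, x * T + T - 1 ≤ c ↔ x ≤ M := by
      intro x
      rw [hM, hMval]
      constructor
      · intro hx
        have : x + 1 ≤ (c + 1) / T := by
          rw [Int.le_ediv_iff_mul_le hT]; nlinarith
        omega
      · intro hx
        have hx1 : x + 1 ≤ (c + 1) / T := by omega
        rw [Int.le_ediv_iff_mul_le hT] at hx1
        nlinarith
    have hset : {b : ℤ | dense1 T W a b} = ↑(Finset.Icc (a - M) (a + M)) := by
      ext b
      simp only [Set.mem_setOf_eq, Finset.coe_Icc, Set.mem_Icc]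
      rw [dense1_iff' T W hT a b, hhalf, habm (a - b), habm (b - a)]
      omega
    rw [hset, Set.ncard_coe_finset, Int.card_Icc]
    omega
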